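/- arXiv:2603.23216 — 4 statements merged into one kernel-verified Lean document; each statement's English description precedes it below -/
import Mathlib

section
/- Let P be a polygon and let C and C' be maximal horizontal corridors of P. Then either C = C' or the interiors of C and C' are disjoint. The same statement holds for maximal vertical corridors of P. -/
open Set

/-- A polygon (possibly with holes): a compact set with nonempty interior that
equals the closure of its interior and whose frontier is a finite union of segments. -/
def IsPolygon (P : Set (ℝ × ℝ)) : Prop :=
  IsCompact P ∧ (interior P).Nonempty ∧ P = closure (interior P) ∧
    ∃ (n : ℕ) (f g : Fin n → ℝ × ℝ), frontier P = ⋃ i, segment ℝ (f i) (g i)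

/-- A nondegenerate line segment. -/
def IsSeg (E : Set (ℝ × ℝ)) : Prop :=
  ∃ x y : ℝ × ℝ, x ≠ y ∧ E = segment ℝ x y

/-- An edge of `P`: a maximal line segment contained in the frontier of `P`. -/
def IsEdge (P E : Set (ℝ × ℝ)) : Prop :=
  IsSeg E ∧ E ⊆ frontier P ∧
    ∀ E', IsSeg E' → E' ⊆ frontier P → E ⊆ E' → E' = E

/-- A horizontal corridor of `P`: a convex quadrilateral `C ⊆ P` with two vertical sides
whose other two sides are each contained in an edge of `P`. -/
def IsHCorridor (P C : Set (ℝ × ℝ)) : Prop :=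
  ∃ x₁ x₂ y₁ y₂ y₃ y₄ : ℝ, x₁ < x₂ ∧ y₁ < y₂ ∧ y₃ < y₄ ∧
    C = convexHull ℝ ({(x₁, y₁), (x₁, y₂), (x₂, y₃), (x₂, y₄)} : Set (ℝ × ℝ)) ∧
    C ⊆ P ∧
    (∃ E, IsEdge P E ∧ segment ℝ (x₁, y₁) (x₂, y₃) ⊆ E) ∧
    (∃ E, IsEdge P E ∧ segment ℝ (x₁, y₂) (x₂, y₄) ⊆ E)

/-- A vertical corridor of `P`: a convex quadrilateral `C ⊆ P` with two horizontal sides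
whose other two sides are each contained in an edge of `P`. -/
def IsVCorridor (P C : Set (ℝ × ℝ)) : Prop :=
  ∃ y₁ y₂ x₁ x₂ x₃ x₄ : ℝ, y₁ < y₂ ∧ x₁ < x₂ ∧ x₃ < x₄ ∧
    C = convexHull ℝ ({(x₁, y₁), (x₂, y₁), (x₃, y₂), (x₄, y₂)} : Set (ℝ × ℝ)) ∧
    C ⊆ P ∧
    (∃ E, IsEdge P E ∧ segment ℝ (x₁, y₁) (x₃, y₂) ⊆ E) ∧
    (∃ E, IsEdge P E ∧ segment ℝ (x₂, y₁) (x₄, y₂) ⊆ E)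

/-- A maximal horizontal corridor: one not strictly contained in any other horizontal
corridor. -/
def IsMaxHCorridor (P C : Set (ℝ × ℝ)) : Prop :=
  IsHCorridor P C ∧ ∀ C', IsHCorridor P C' → C ⊆ C' → C' = C

/-- A maximal vertical corridor: one not strictly contained in any other vertical
corridor. -/
def IsMaxVCorridor (P C : Set (ℝ × ℝ)) : Prop :=
  IsVCorridor P C ∧ ∀ C', IsVCorridor P C' → C ⊆ C' → C' = C

/-!
Write a horizontal corridor as a trapezoid `a ≤ x ≤ b`, `α + β x ≤ y ≤ γ + δ x`. If two
maximal corridors `C`, `C'` share an interior point `z`, their lower sides lie on one line: if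
the lower side of `C'` passed above that of `C` at `z.1`, its point there would lie on `∂P` and
in the interior of `C ⊆ P`. Likewise for the upper sides, and since the common interior is open
the lines agree over an interval, hence everywhere. So `C ∪ C'` is the trapezoid over the union
of the two overlapping `x`-ranges; each of its sides is covered by two overlapping collinear
edges, whose union is a segment in `∂P` and hence a single edge. Thus `C ∪ C'` is a corridor, and
maximality gives `C = C ∪ C' = C'`. Vertical corridors are horizontal corridors of the polygon
reflected in the diagonal.
-/

open Function Filter Topology

theorem AffineMap.apply_eq_of_apply_lineMap_eq {k V P : Type*} [Field k] [AddCommGroup V]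
    [Module k V] [AddTorsor V P] (g : P →ᵃ[k] k) {u v : P} {s t c : k} (hst : s ≠ t)
    (hs : g (AffineMap.lineMap u v s) = c) (ht : g (AffineMap.lineMap u v t) = c) :
    g u = c ∧ g v = c := by
  rw [AffineMap.apply_lineMap, AffineMap.lineMap_apply_ring'] at hs ht
  have hvu : g v = g u := by
    have : (s - t) * (g v - g u) = 0 := by linear_combination hs - ht
    simpa [sub_ne_zero.2 hst, sub_eq_zero] using this
  rw [hvu, sub_self, mul_zero, zero_add] at hs
  exact ⟨hs, hvu.trans hs⟩

theorem coeffs_eq_of_eqOn {α β α' β' : ℝ} {U : Set ℝ} (hU : U.Nontrivial)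
    (h : EqOn (α + β * ·) (α' + β' * ·) U) : α = α' ∧ β = β' := by
  obtain ⟨x, hx, y, hy, hxy⟩ := hU
  have hx := h hx
  have hy := h hy
  simp only at hx hy
  obtain rfl : β = β' := by
    have : (β - β') * (x - y) = 0 := by linear_combination hx - hy
    simpa [sub_ne_zero.2 hxy, sub_eq_zero] using this
  exact ⟨by linarith, rfl⟩

theorem IsOpen.nontrivial_image_fst {X Y : Type*} [TopologicalSpace X] [T1Space X]
    [∀ x : X, (𝓝[≠] x).NeBot] [TopologicalSpace Y] {U : Set (X × Y)} (hU : IsOpen U)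
    (hne : U.Nonempty) : (Prod.fst '' U).Nontrivial := by
  obtain ⟨x, hx⟩ := hne.image Prod.fst
  exact (infinite_of_mem_nhds x ((isOpenMap_fst U hU).mem_nhds hx)).nontrivial

def graphLine (α β : ℝ) : ℝ →ᵃ[ℝ] ℝ × ℝ where
  toFun x := (x, α + β * x)
  linear := LinearMap.id.prod (β • LinearMap.id)
  map_vadd' x v := by simp [mul_add, add_left_comm]

@[simp]
theorem graphLine_apply (α β x : ℝ) : graphLine α β x = (x, α + β * x) := rfl

theorem graphLine_injective (α β : ℝ) : Injective (graphLine α β) :=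
  fun _ _ h => congrArg Prod.fst h

theorem segment_graphLine (α β s t : ℝ) :
    segment ℝ (graphLine α β s) (graphLine α β t) = graphLine α β '' uIcc s t := by
  rw [← image_segment, segment_eq_uIcc]

theorem isSeg_image_graphLine_Icc (α β : ℝ) {s t : ℝ} (hst : s < t) :
    IsSeg (graphLine α β '' Icc s t) :=
  ⟨_, _, (graphLine_injective α β).ne hst.ne, by rw [segment_graphLine, uIcc_of_le hst.le]⟩

theorem IsSeg.exists_eq_image_graphLine {E : Set (ℝ × ℝ)} (hE : IsSeg E) {α β a b : ℝ}
    (hab : a < b) (hsub : graphLine α β '' Icc a b ⊆ E) :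
    ∃ s t, s ≤ a ∧ b ≤ t ∧ E = graphLine α β '' Icc s t := by
  obtain ⟨u, v, -, rfl⟩ := hE
  -- the line is the level set `y - β x = α`
  let ℓ : ℝ × ℝ →ᵃ[ℝ] ℝ := (LinearMap.snd ℝ ℝ ℝ - β • LinearMap.fst ℝ ℝ ℝ).toAffineMap
  have hℓ : ∀ p, ℓ p = α → ∃ x, p = graphLine α β x := fun p hp =>
    ⟨p.1, Prod.ext rfl (by
      simp only [LinearMap.coe_toAffineMap, LinearMap.sub_apply, LinearMap.snd_apply,
        LinearMap.smul_apply, LinearMap.fst_apply, smul_eq_mul, graphLine_apply, ℓ] at hp ⊢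
      linarith)⟩
  have hℓgraph : ∀ x, ℓ (graphLine α β x) = α := fun x => by simp [ℓ]
  have mem : ∀ x ∈ Icc a b, ∃ s, AffineMap.lineMap u v s = graphLine α β x := fun x hx => by
    obtain ⟨s, -, hs⟩ := (segment_eq_image_lineMap ℝ u v) ▸ hsub (mem_image_of_mem _ hx)
    exact ⟨s, hs⟩
  obtain ⟨s, hs⟩ := mem a (left_mem_Icc.2 hab.le)
  obtain ⟨t, ht⟩ := mem b (right_mem_Icc.2 hab.le)
  have hst : s ≠ t := by
    rintro rfl
    exact hab.ne (graphLine_injective α β (hs.symm.trans ht))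
  obtain ⟨hu, hv⟩ := ℓ.apply_eq_of_apply_lineMap_eq hst (hs ▸ hℓgraph a) (ht ▸ hℓgraph b)
  obtain ⟨x, rfl⟩ := hℓ u hu
  obtain ⟨y, rfl⟩ := hℓ v hv
  rw [segment_graphLine] at hsub ⊢
  obtain ⟨hsa, hbt⟩ :=
    (Icc_subset_Icc_iff hab.le).1 ((image_subset_image_iff (graphLine_injective α β)).1 hsub)
  exact ⟨_, _, hsa, hbt, rfl⟩

theorem IsEdge.eq_of_isSeg_union {P E E' : Set (ℝ × ℝ)} (hE : IsEdge P E) (hE' : IsEdge P E')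
    (h : IsSeg (E ∪ E')) : E = E' := by
  have hfr := union_subset hE.2.1 hE'.2.1
  exact (hE.2.2 _ h hfr subset_union_left).symm.trans (hE'.2.2 _ h hfr subset_union_right)

theorem IsEdge.eq_of_overlap {P E E' : Set (ℝ × ℝ)} (hE : IsEdge P E) (hE' : IsEdge P E')
    {α β a b a' b' : ℝ} (hab : a < b) (hab' : a' < b') (hsub : graphLine α β '' Icc a b ⊆ E)
    (hsub' : graphLine α β '' Icc a' b' ⊆ E') (hb : a' ≤ b) (hb' : a ≤ b') : E = E' := by
  obtain ⟨s, t, hsa, hbt, rfl⟩ := hE.1.exists_eq_image_graphLine hab hsub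
  obtain ⟨s', t', hsa', hbt', rfl⟩ := hE'.1.exists_eq_image_graphLine hab' hsub'
  refine hE.eq_of_isSeg_union hE' ?_
  rw [← image_union, Icc_union_Icc' (by linarith) (by linarith)]
  exact isSeg_image_graphLine_Icc α β
    ((min_le_left _ _).trans_lt (hsa.trans_lt (hab.trans_le (hbt.trans (le_max_left _ _)))))

theorem exists_isEdge_image_Icc_min_max {P : Set (ℝ × ℝ)} {α β a b a' b' : ℝ} (hab : a < b)
    (hab' : a' < b') (h : ∃ E, IsEdge P E ∧ graphLine α β '' Icc a b ⊆ E)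
    (h' : ∃ E, IsEdge P E ∧ graphLine α β '' Icc a' b' ⊆ E) (hb : a' ≤ b) (hb' : a ≤ b') :
    ∃ E, IsEdge P E ∧ graphLine α β '' Icc (min a a') (max b b') ⊆ E := by
  obtain ⟨E, hE, hsub⟩ := h
  obtain ⟨E', hE', hsub'⟩ := h'
  refine ⟨E, hE, ?_⟩
  rw [← Icc_union_Icc' hb hb', image_union]
  exact union_subset hsub (hE.eq_of_overlap hE' hab hab' hsub hsub' hb hb' ▸ hsub')

def trapezoid (a b : ℝ) (f g : ℝ → ℝ) : Set (ℝ × ℝ) :=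
  {p | p.1 ∈ Icc a b ∧ p.2 ∈ Icc (f p.1) (g p.1)}

section Trapezoid

variable {a b : ℝ} {f g : ℝ → ℝ} {p : ℝ × ℝ}

theorem interior_trapezoid_subset :
    interior (trapezoid a b f g) ⊆ {p | p.1 ∈ Ioo a b ∧ p.2 ∈ Ioo (f p.1) (g p.1)} := by
  intro p hp
  -- restrict to the horizontal and the vertical line through `p`
  have slice : ∀ {φ : ℝ → ℝ × ℝ} {S : Set ℝ} {t : ℝ}, Continuous φ → φ t = p →
      φ ⁻¹' trapezoid a b f g ⊆ S → t ∈ interior S := fun hφ hφt hS =>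
    interior_mono hS (preimage_interior_subset_interior_preimage hφ (by rwa [mem_preimage, hφt]))
  have hx := slice (φ := fun x => (x, p.2)) (S := Icc a b) (by fun_prop) rfl fun _ hx => hx.1
  have hy := slice (φ := Prod.mk p.1) (S := Icc (f p.1) (g p.1)) (by fun_prop) rfl
    fun _ hy => hy.2
  rw [interior_Icc] at hx hy
  exact ⟨hx, hy⟩

theorem mem_interior_trapezoid (hf : Continuous f) (hg : Continuous g) :
    p ∈ interior (trapezoid a b f g) ↔ p.1 ∈ Ioo a b ∧ p.2 ∈ Ioo (f p.1) (g p.1) := by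
  refine ⟨fun hp => interior_trapezoid_subset hp, fun hp => ?_⟩
  have hopen : IsOpen {q : ℝ × ℝ | q.1 ∈ Ioo a b ∧ q.2 ∈ Ioo (f q.1) (g q.1)} := by
    simp only [mem_Ioo, ofPred_and]
    exact ((isOpen_lt continuous_const continuous_fst).inter (isOpen_lt continuous_fst
      continuous_const)).inter ((isOpen_lt (hf.comp continuous_fst) continuous_snd).inter
      (isOpen_lt continuous_snd (hg.comp continuous_fst)))
  refine interior_maximal (fun q hq => ?_) hopen hp
  exact ⟨Ioo_subset_Icc_self hq.1, Ioo_subset_Icc_self hq.2⟩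

theorem trapezoid_union_trapezoid {a' b' : ℝ} (hb : a' ≤ b) (hb' : a ≤ b') :
    trapezoid a b f g ∪ trapezoid a' b' f g = trapezoid (min a a') (max b b') f g := by
  ext p
  simp only [trapezoid, ← Icc_union_Icc' hb hb', mem_union, mem_ofPred_eq, or_and_right]

theorem convex_trapezoid (a b α β γ δ : ℝ) :
    Convex ℝ (trapezoid a b (α + β * ·) (γ + δ * ·)) := by
  rintro p ⟨⟨h₁, h₂⟩, h₃, h₄⟩ q ⟨⟨h₁', h₂'⟩, h₃', h₄'⟩ s t hs ht hst
  obtain rfl : t = 1 - s := by linarith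
  refine ⟨⟨?_, ?_⟩, ?_, ?_⟩ <;>
    simp only [Prod.fst_add, Prod.snd_add, Prod.smul_fst, Prod.smul_snd, smul_eq_mul] <;>
    nlinarith [mul_le_mul_of_nonneg_left h₁ hs, mul_le_mul_of_nonneg_left h₁' ht,
      mul_le_mul_of_nonneg_left h₂ hs, mul_le_mul_of_nonneg_left h₂' ht,
      mul_le_mul_of_nonneg_left h₃ hs, mul_le_mul_of_nonneg_left h₃' ht,
      mul_le_mul_of_nonneg_left h₄ hs, mul_le_mul_of_nonneg_left h₄' ht]

theorem convexHull_eq_trapezoid {α β γ δ : ℝ} (hab : a ≤ b) (ha : α + β * a ≤ γ + δ * a)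
    (hb : α + β * b ≤ γ + δ * b) :
    convexHull ℝ {(a, α + β * a), (a, γ + δ * a), (b, α + β * b), (b, γ + δ * b)} =
      trapezoid a b (α + β * ·) (γ + δ * ·) := by
  set V : Set (ℝ × ℝ) := {(a, α + β * a), (a, γ + δ * a), (b, α + β * b), (b, γ + δ * b)}
  apply (convexHull_min _ (convex_trapezoid a b α β γ δ)).antisymm
  · rintro p ⟨hx, hy⟩
    -- `p` lies on the vertical segment between a point of the lower and one of the upper side
    have side : ∀ μ ν, graphLine μ ν a ∈ V → graphLine μ ν b ∈ V →
        graphLine μ ν p.1 ∈ convexHull ℝ V := fun μ ν hμa hμb =>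
      segment_subset_convexHull hμa hμb
        (by rw [segment_graphLine, uIcc_of_le hab]; exact mem_image_of_mem _ hx)
    refine (convex_convexHull ℝ V).segment_subset (side α β (by simp [V]) (by simp [V]))
      (side γ δ (by simp [V]) (by simp [V])) ?_
    rw [graphLine_apply, graphLine_apply, ← Prod.image_mk_segment_right,
      segment_eq_Icc (hy.1.trans hy.2)]
    exact ⟨p.2, hy, rfl⟩
  · rintro p (rfl | rfl | rfl | rfl) <;> simp [trapezoid, hab, ha, hb]

end Trapezoid

theorem lower_le_lower_of_mem_interior {P : Set (ℝ × ℝ)} {a b a' b' : ℝ} {f g f' g' : ℝ → ℝ}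
    {z : ℝ × ℝ} (hf : Continuous f) (hg : Continuous g) (hP : trapezoid a b f g ⊆ P)
    (hfr : ∀ x ∈ Icc a' b', (x, f' x) ∈ frontier P) (hz : z ∈ interior (trapezoid a b f g))
    (hz' : z ∈ interior (trapezoid a' b' f' g')) : f' z.1 ≤ f z.1 := by
  obtain ⟨hx, hy⟩ := interior_trapezoid_subset hz
  obtain ⟨hx', hy'⟩ := interior_trapezoid_subset hz'
  by_contra! h
  refine (hfr z.1 (Ioo_subset_Icc_self hx')).2 (interior_mono hP ?_)
  exact (mem_interior_trapezoid hf hg).2 ⟨hx, h, hy'.1.trans hy.2⟩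

theorem upper_le_upper_of_mem_interior {P : Set (ℝ × ℝ)} {a b a' b' : ℝ} {f g f' g' : ℝ → ℝ}
    {z : ℝ × ℝ} (hf : Continuous f) (hg : Continuous g) (hP : trapezoid a b f g ⊆ P)
    (hfr : ∀ x ∈ Icc a' b', (x, g' x) ∈ frontier P) (hz : z ∈ interior (trapezoid a b f g))
    (hz' : z ∈ interior (trapezoid a' b' f' g')) : g z.1 ≤ g' z.1 := by
  obtain ⟨hx, hy⟩ := interior_trapezoid_subset hz
  obtain ⟨hx', hy'⟩ := interior_trapezoid_subset hz'
  by_contra! h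
  refine (hfr z.1 (Ioo_subset_Icc_self hx')).2 (interior_mono hP ?_)
  exact (mem_interior_trapezoid hf hg).2 ⟨hx, hy.1.trans hy'.2, h⟩

structure IsHCorridorTrapezoid (P : Set (ℝ × ℝ)) (a b α β γ δ : ℝ) : Prop where
  lt : a < b
  lt_left : α + β * a < γ + δ * a
  lt_right : α + β * b < γ + δ * b
  subset : trapezoid a b (α + β * ·) (γ + δ * ·) ⊆ P
  lower : ∃ E, IsEdge P E ∧ graphLine α β '' Icc a b ⊆ E
  upper : ∃ E, IsEdge P E ∧ graphLine γ δ '' Icc a b ⊆ E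

theorem exists_line_through {x₁ x₂ : ℝ} (h : x₁ ≠ x₂) (y₁ y₂ : ℝ) :
    ∃ α β : ℝ, α + β * x₁ = y₁ ∧ α + β * x₂ = y₂ := by
  have : x₂ - x₁ ≠ 0 := sub_ne_zero.2 h.symm
  exact ⟨y₁ - (y₂ - y₁) / (x₂ - x₁) * x₁, (y₂ - y₁) / (x₂ - x₁), by ring, by field_simp; ring⟩

theorem isHCorridor_iff {P C : Set (ℝ × ℝ)} :
    IsHCorridor P C ↔ ∃ a b α β γ δ : ℝ,
      IsHCorridorTrapezoid P a b α β γ δ ∧ C = trapezoid a b (α + β * ·) (γ + δ * ·) := by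
  have side : ∀ {a b : ℝ}, a < b → ∀ α β : ℝ,
      segment ℝ ((a, α + β * a) : ℝ × ℝ) (b, α + β * b) = graphLine α β '' Icc a b :=
    fun hab α β => by rw [← uIcc_of_le hab.le]; exact segment_graphLine α β _ _
  constructor
  · rintro ⟨x₁, x₂, y₁, y₂, y₃, y₄, hx, hy₁₂, hy₃₄, rfl, hCP, hlower, hupper⟩
    obtain ⟨α, β, rfl, rfl⟩ := exists_line_through hx.ne y₁ y₃
    obtain ⟨γ, δ, rfl, rfl⟩ := exists_line_through hx.ne y₂ y₄
    rw [convexHull_eq_trapezoid hx.le hy₁₂.le hy₃₄.le] at hCP ⊢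
    rw [side hx] at hlower hupper
    exact ⟨x₁, x₂, α, β, γ, δ, ⟨hx, hy₁₂, hy₃₄, hCP, hlower, hupper⟩, rfl⟩
  · rintro ⟨a, b, α, β, γ, δ, ⟨hab, ha, hb, hCP, hlower, hupper⟩, rfl⟩
    refine ⟨a, b, _, _, _, _, hab, ha, hb, (convexHull_eq_trapezoid hab.le ha.le hb.le).symm,
      hCP, ?_, ?_⟩ <;> rwa [side hab]

namespace IsHCorridorTrapezoid

variable {P : Set (ℝ × ℝ)} {a b α β γ δ : ℝ}

theorem lower_mem_frontier (h : IsHCorridorTrapezoid P a b α β γ δ) :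
    ∀ x ∈ Icc a b, (x, α + β * x) ∈ frontier P := by
  obtain ⟨E, hE, hsub⟩ := h.lower
  exact fun x hx => hE.2.1 (hsub (mem_image_of_mem _ hx))

theorem upper_mem_frontier (h : IsHCorridorTrapezoid P a b α β γ δ) :
    ∀ x ∈ Icc a b, (x, γ + δ * x) ∈ frontier P := by
  obtain ⟨E, hE, hsub⟩ := h.upper
  exact fun x hx => hE.2.1 (hsub (mem_image_of_mem _ hx))

theorem lines_eq {a' b' α' β' γ' δ' : ℝ} (h : IsHCorridorTrapezoid P a b α β γ δ)
    (h' : IsHCorridorTrapezoid P a' b' α' β' γ' δ')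
    (hne : (interior (trapezoid a b (α + β * ·) (γ + δ * ·)) ∩
      interior (trapezoid a' b' (α' + β' * ·) (γ' + δ' * ·))).Nonempty) :
    (α = α' ∧ β = β') ∧ (γ = γ' ∧ δ = δ') := by
  have hU := (isOpen_interior.inter isOpen_interior).nontrivial_image_fst hne
  have hcont : ∀ μ ν : ℝ, Continuous (μ + ν * ·) := fun _ _ => by fun_prop
  refine ⟨coeffs_eq_of_eqOn hU ?_, coeffs_eq_of_eqOn hU ?_⟩ <;> rintro _ ⟨z, ⟨hz, hz'⟩, rfl⟩
  · exact le_antisymm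
      (lower_le_lower_of_mem_interior (hcont _ _) (hcont _ _) h'.subset h.lower_mem_frontier
        hz' hz)
      (lower_le_lower_of_mem_interior (hcont _ _) (hcont _ _) h.subset h'.lower_mem_frontier
        hz hz')
  · exact le_antisymm
      (upper_le_upper_of_mem_interior (hcont _ _) (hcont _ _) h.subset h'.upper_mem_frontier
        hz hz')
      (upper_le_upper_of_mem_interior (hcont _ _) (hcont _ _) h'.subset h.upper_mem_frontier
        hz' hz)

theorem union {a' b' : ℝ} (h : IsHCorridorTrapezoid P a b α β γ δ)
    (h' : IsHCorridorTrapezoid P a' b' α β γ δ) (hb : a' ≤ b) (hb' : a ≤ b') :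
    IsHCorridorTrapezoid P (min a a') (max b b') α β γ δ where
  lt := (min_le_left _ _).trans_lt (h.lt.trans_le (le_max_left _ _))
  lt_left := by
    rcases min_choice a a' with hm | hm <;> rw [hm]
    exacts [h.lt_left, h'.lt_left]
  lt_right := by
    rcases max_choice b b' with hm | hm <;> rw [hm]
    exacts [h.lt_right, h'.lt_right]
  subset := trapezoid_union_trapezoid hb hb' ▸ union_subset h.subset h'.subset
  lower := exists_isEdge_image_Icc_min_max h.lt h'.lt h.lower h'.lower hb hb'
  upper := exists_isEdge_image_Icc_min_max h.lt h'.lt h.upper h'.upper hb hb'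

end IsHCorridorTrapezoid

theorem IsMaxHCorridor.eq_of_inter_interior_nonempty {P C C' : Set (ℝ × ℝ)}
    (hC : IsMaxHCorridor P C) (hC' : IsMaxHCorridor P C')
    (hne : (interior C ∩ interior C').Nonempty) : C = C' := by
  obtain ⟨a, b, α, β, γ, δ, h, rfl⟩ := isHCorridor_iff.1 hC.1
  obtain ⟨a', b', α', β', γ', δ', h', rfl⟩ := isHCorridor_iff.1 hC'.1
  obtain ⟨⟨rfl, rfl⟩, rfl, rfl⟩ := h.lines_eq h' hne
  obtain ⟨z, hz, hz'⟩ := hne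
  obtain ⟨⟨haz, hzb⟩, -⟩ := interior_trapezoid_subset hz
  obtain ⟨⟨ha'z, hzb'⟩, -⟩ := interior_trapezoid_subset hz'
  have hb : a' ≤ b := by linarith
  have hb' : a ≤ b' := by linarith
  have hunion := isHCorridor_iff.2 ⟨_, _, _, _, _, _, h.union h' hb hb', rfl⟩
  rw [← trapezoid_union_trapezoid hb hb'] at hunion
  exact (hC.2 _ hunion subset_union_left).symm.trans (hC'.2 _ hunion subset_union_right)

section Swap

variable {P C E : Set (ℝ × ℝ)}

theorem image_swap_image_swap {X Y : Type*} (S : Set (X × Y)) :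
    Prod.swap '' (Prod.swap '' S) = S := by
  simp [image_image]

theorem image_swap_interior {X Y : Type*} [TopologicalSpace X] [TopologicalSpace Y]
    (S : Set (X × Y)) : Prod.swap '' interior S = interior (Prod.swap '' S) :=
  (Homeomorph.prodComm X Y).image_interior S

theorem image_swap_frontier {X Y : Type*} [TopologicalSpace X] [TopologicalSpace Y]
    (S : Set (X × Y)) : Prod.swap '' frontier S = frontier (Prod.swap '' S) :=
  (Homeomorph.prodComm X Y).image_frontier S

theorem image_swap_segment {𝕜 M N : Type*} [Ring 𝕜] [PartialOrder 𝕜] [IsOrderedRing 𝕜]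
    [AddCommGroup M] [Module 𝕜 M] [AddCommGroup N] [Module 𝕜 N] (x y : M × N) :
    Prod.swap '' segment 𝕜 x y = segment 𝕜 x.swap y.swap :=
  image_segment 𝕜 (LinearEquiv.prodComm 𝕜 M N).toLinearMap.toAffineMap x y

theorem image_swap_convexHull {𝕜 M N : Type*} [Ring 𝕜] [PartialOrder 𝕜] [IsOrderedRing 𝕜]
    [AddCommGroup M] [Module 𝕜 M] [AddCommGroup N] [Module 𝕜 N] (S : Set (M × N)) :
    Prod.swap '' convexHull 𝕜 S = convexHull 𝕜 (Prod.swap '' S) :=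
  (LinearEquiv.prodComm 𝕜 M N).toLinearMap.image_convexHull S

theorem IsSeg.image_swap (h : IsSeg E) : IsSeg (Prod.swap '' E) := by
  obtain ⟨x, y, hxy, rfl⟩ := h
  exact ⟨x.swap, y.swap, Prod.swap_injective.ne hxy, image_swap_segment x y⟩

theorem IsEdge.image_swap (h : IsEdge P E) : IsEdge (Prod.swap '' P) (Prod.swap '' E) := by
  refine ⟨h.1.image_swap, image_swap_frontier P ▸ image_mono h.2.1, fun E' hE' hfr hsub => ?_⟩
  rw [← image_swap_image_swap E', h.2.2 _ hE'.image_swap]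
  · simpa [← image_swap_frontier, image_swap_image_swap] using image_mono (f := Prod.swap) hfr
  · simpa [image_swap_image_swap] using image_mono (f := Prod.swap) hsub

theorem IsVCorridor.image_swap (h : IsVCorridor P C) :
    IsHCorridor (Prod.swap '' P) (Prod.swap '' C) := by
  obtain ⟨y₁, y₂, x₁, x₂, x₃, x₄, hy, hx₁₂, hx₃₄, rfl, hCP, ⟨E, hE, hEsub⟩, ⟨E', hE', hE'sub⟩⟩ := h
  refine ⟨y₁, y₂, x₁, x₂, x₃, x₄, hy, hx₁₂, hx₃₄, ?_, image_mono hCP,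
    ⟨_, hE.image_swap, ?_⟩, ⟨_, hE'.image_swap, ?_⟩⟩
  · simp [image_swap_convexHull, image_insert_eq]
  · simpa [image_swap_segment] using image_mono (f := Prod.swap) hEsub
  · simpa [image_swap_segment] using image_mono (f := Prod.swap) hE'sub

theorem IsHCorridor.image_swap (h : IsHCorridor P C) :
    IsVCorridor (Prod.swap '' P) (Prod.swap '' C) := by
  obtain ⟨x₁, x₂, y₁, y₂, y₃, y₄, hx, hy₁₂, hy₃₄, rfl, hCP, ⟨E, hE, hEsub⟩, ⟨E', hE', hE'sub⟩⟩ := h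
  refine ⟨x₁, x₂, y₁, y₂, y₃, y₄, hx, hy₁₂, hy₃₄, ?_, image_mono hCP,
    ⟨_, hE.image_swap, ?_⟩, ⟨_, hE'.image_swap, ?_⟩⟩
  · simp [image_swap_convexHull, image_insert_eq]
  · simpa [image_swap_segment] using image_mono (f := Prod.swap) hEsub
  · simpa [image_swap_segment] using image_mono (f := Prod.swap) hE'sub

theorem IsMaxVCorridor.image_swap (h : IsMaxVCorridor P C) :
    IsMaxHCorridor (Prod.swap '' P) (Prod.swap '' C) := by
  refine ⟨h.1.image_swap, fun C' hC' hsub => ?_⟩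
  have := h.2 _ (image_swap_image_swap P ▸ hC'.image_swap)
    (by simpa [image_swap_image_swap] using image_mono (f := Prod.swap) hsub)
  rw [← image_swap_image_swap C', this]

end Swap

theorem IsMaxVCorridor.eq_of_inter_interior_nonempty {P C C' : Set (ℝ × ℝ)}
    (hC : IsMaxVCorridor P C) (hC' : IsMaxVCorridor P C')
    (hne : (interior C ∩ interior C').Nonempty) : C = C' := by
  refine image_injective.2 Prod.swap_injective
    (hC.image_swap.eq_of_inter_interior_nonempty hC'.image_swap ?_)
  rw [← image_swap_interior, ← image_swap_interior, ← image_inter Prod.swap_injective]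
  exact hne.image _

theorem maximal_corridors_disjoint_general (P : Set (ℝ × ℝ)) :
    (∀ C C', IsMaxHCorridor P C → IsMaxHCorridor P C' →
      C = C' ∨ interior C ∩ interior C' = ∅) ∧
    (∀ C C', IsMaxVCorridor P C → IsMaxVCorridor P C' →
      C = C' ∨ interior C ∩ interior C' = ∅) := by
  refine ⟨fun C C' hC hC' => ?_, fun C C' hC hC' => ?_⟩ <;>
    rw [or_iff_not_imp_right, ← ne_eq, ← nonempty_iff_ne_empty]
  exacts [hC.eq_of_inter_interior_nonempty hC', hC.eq_of_inter_interior_nonempty hC']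

/-- Two maximal horizontal corridors of a polygon are equal or have disjoint interiors,
and likewise for maximal vertical corridors. -/
theorem maximal_corridors_disjoint (P : Set (ℝ × ℝ)) (hP : IsPolygon P) :
    (∀ C C', IsMaxHCorridor P C → IsMaxHCorridor P C' →
      C = C' ∨ interior C ∩ interior C' = ∅) ∧
    (∀ C C', IsMaxVCorridor P C → IsMaxVCorridor P C' →
      C = C' ∨ interior C ∩ interior C' = ∅) :=
  maximal_corridors_disjoint_general P
end

section
/- Let S and T be convex polygons with S ⊆ T. If T admits a small cover of cardinality k, then S admits a small cover of cardinality at most k. In particular, the minimum cardinality of a small cover of S is at most the minimum cardinality of a small cover of T. -/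
/-
Every piece of a small cover of `T` lies in some unit square `Q`, and `S ⊆ T` is covered by
these squares. Each `S ∩ Q` is convex, hence connected, and its frontier lies on the edges of
`S` and of `Q`; a closed convex set meets a segment in a segment or not at all, so `S ∩ Q` is
again a polygon once its interior is nonempty. The intersections with empty interior can be
dropped, because `S` is the closure of its interior and a finite union of closed sets with
empty interior has empty interior. For the bound on minima, `T` must have some small cover
(else its `sInf` is the junk value `0`); the same construction applied to finitely many unit
squares covering the compact set `T` provides one.
-/

open Set

/-- An axis-aligned unit square `[a, a+1] × [b, b+1]`. -/
def UnitSquare (a b : ℝ) : Set (ℝ × ℝ) := Icc a (a + 1) ×ˢ Icc b (b + 1)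

/-- A small piece: a connected polygon contained in some axis-aligned unit square. -/
def IsSmallPiece (Q : Set (ℝ × ℝ)) : Prop :=
  IsPolygon Q ∧ IsConnected Q ∧ ∃ a b : ℝ, Q ⊆ UnitSquare a b

/-- A small cover of `P`: a finite family of small pieces, each contained in `P`,
whose union is `P`. -/
def IsSmallCover (P : Set (ℝ × ℝ)) (𝒬 : Set (Set (ℝ × ℝ))) : Prop :=
  𝒬.Finite ∧ (∀ Q ∈ 𝒬, IsSmallPiece Q ∧ Q ⊆ P) ∧ ⋃₀ 𝒬 = P

section SegmentUnion

variable {E : Type*} [AddCommGroup E] [Module ℝ E]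

def IsSegmentUnion (F : Set E) : Prop :=
  ∃ s : Finset (E × E), F = ⋃ p ∈ s, segment ℝ p.1 p.2

theorem isSegmentUnion_empty : IsSegmentUnion (∅ : Set E) :=
  ⟨∅, by simp⟩

theorem isSegmentUnion_segment (x y : E) : IsSegmentUnion (segment ℝ x y) :=
  ⟨{(x, y)}, by simp⟩

theorem IsSegmentUnion.union {F G : Set E} (hF : IsSegmentUnion F) (hG : IsSegmentUnion G) :
    IsSegmentUnion (F ∪ G) := by
  classical
  obtain ⟨s, rfl⟩ := hF
  obtain ⟨t, rfl⟩ := hG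
  exact ⟨s ∪ t, (Finset.set_biUnion_union s t _).symm⟩

theorem IsSegmentUnion.biUnion {ι : Type*} {s : Finset ι} {F : ι → Set E}
    (hF : ∀ i ∈ s, IsSegmentUnion (F i)) : IsSegmentUnion (⋃ i ∈ s, F i) := by
  classical
  induction s using Finset.induction_on with
  | empty => simpa using isSegmentUnion_empty
  | insert i s _ ih =>
    rw [Finset.set_biUnion_insert]
    exact (hF i (s.mem_insert_self i)).union (ih fun j hj => hF j (Finset.mem_insert_of_mem hj))

theorem isSegmentUnion_iff_exists_fin {F : Set E} :
    IsSegmentUnion F ↔ ∃ (n : ℕ) (f g : Fin n → E), F = ⋃ i, segment ℝ (f i) (g i) := by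
  classical
  constructor
  · rintro ⟨s, rfl⟩
    refine ⟨s.card, fun i => (s.equivFin.symm i).1.1, fun i => (s.equivFin.symm i).1.2, ?_⟩
    rw [s.equivFin.symm.surjective.iUnion_comp (fun p : s => segment ℝ p.1.1 p.1.2),
      iUnion_subtype]
  · rintro ⟨n, f, g, rfl⟩
    refine ⟨Finset.univ.image fun i => (f i, g i), ?_⟩
    simp

variable [TopologicalSpace E] [IsTopologicalAddGroup E] [ContinuousSMul ℝ E]

theorem isSegmentUnion_segment_inter {R : Set E} (hRconv : Convex ℝ R) (hR : IsClosed R)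
    (x y : E) : IsSegmentUnion (segment ℝ x y ∩ R) := by
  set L := AffineMap.lineMap (k := ℝ) x y
  set A : Set ℝ := Icc 0 1 ∩ L ⁻¹' R
  have hLA : segment ℝ x y ∩ R = L '' A := by
    rw [segment_eq_image_lineMap, image_inter_preimage]
  rcases A.eq_empty_or_nonempty with hA | hA
  · rw [hLA, hA, image_empty]
    exact isSegmentUnion_empty
  have hAconv : Convex ℝ A := (convex_Icc 0 1).inter (hRconv.affine_preimage L)
  have hAcpt : IsCompact A := isCompact_Icc.inter_right (hR.preimage AffineMap.lineMap_continuous)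
  have hAIcc : A = Icc (sInf A) (sSup A) :=
    eq_Icc_of_connected_compact ⟨hA, hAconv.isPreconnected⟩ hAcpt
  have hle : sInf A ≤ sSup A := (hAIcc ▸ hA).elim fun _ ht => ht.1.trans ht.2
  rw [hLA, hAIcc, ← segment_eq_Icc hle, image_segment]
  exact isSegmentUnion_segment _ _

theorem IsSegmentUnion.inter {F R : Set E} (hF : IsSegmentUnion F) (hRconv : Convex ℝ R)
    (hR : IsClosed R) : IsSegmentUnion (F ∩ R) := by
  obtain ⟨s, rfl⟩ := hF
  rw [iUnion₂_inter]
  exact IsSegmentUnion.biUnion fun p _ => isSegmentUnion_segment_inter hRconv hR p.1 p.2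

end SegmentUnion

section Topology

variable {X ι : Type*} [TopologicalSpace X]

theorem IsClosed.frontier_inter {s t : Set X} (hs : IsClosed s) (ht : IsClosed t) :
    frontier (s ∩ t) = (frontier s ∪ frontier t) ∩ (s ∩ t) := by
  rw [(hs.inter ht).frontier_eq, hs.frontier_eq, ht.frontier_eq, interior_inter]
  ext x
  simp only [mem_sdiff, mem_inter_iff, mem_union]
  tauto

theorem Set.Finite.interior_biUnion_eq_empty {I : Set ι} (hI : I.Finite) {F : ι → Set X}
    (hF : ∀ i, IsClosed (F i)) (h : ∀ i ∈ I, interior (F i) = ∅) :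
    interior (⋃ i ∈ I, F i) = ∅ := by
  induction I, hI using Set.Finite.induction_on with
  | empty => simp
  | @insert i J _ hJ ih =>
    rw [biUnion_insert, union_comm, interior_union_isClosed_of_interior_empty
      (hJ.isClosed_biUnion fun j _ => hF j) (h i (mem_insert i J))]
    exact ih fun j hj => h j (mem_insert_of_mem i hj)

theorem subset_biUnion_interior_nonempty {S : Set X} (hS : S = closure (interior S))
    {I : Set ι} (hI : I.Finite) {F : ι → Set X} (hF : ∀ i, IsClosed (F i))
    (hcov : S ⊆ ⋃ i ∈ I, F i) : S ⊆ ⋃ i ∈ {i ∈ I | (interior (F i)).Nonempty}, F i := by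
  set A := ⋃ i ∈ {i ∈ I | (interior (F i)).Nonempty}, F i
  set B := ⋃ i ∈ {i ∈ I | interior (F i) = ∅}, F i
  have hA : IsClosed A := (hI.subset (sep_subset _ _)).isClosed_biUnion fun i _ => hF i
  have hB : interior B = ∅ :=
    (hI.subset (sep_subset _ _)).interior_biUnion_eq_empty hF fun _ hi => hi.2
  have hAB : S ⊆ A ∪ B := fun x hx => by
    obtain ⟨i, hi, hxi⟩ := mem_iUnion₂.1 (hcov hx)
    rcases (interior (F i)).eq_empty_or_nonempty with h | h
    · exact Or.inr (mem_biUnion ⟨hi, h⟩ hxi)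
    · exact Or.inl (mem_biUnion ⟨hi, h⟩ hxi)
  calc S = closure (interior S) := hS
    _ ⊆ closure (interior (A ∪ B)) := closure_mono (interior_mono hAB)
    _ = closure (interior A) := by rw [interior_union_isClosed_of_interior_empty hA hB]
    _ ⊆ A := closure_minimal interior_subset hA

end Topology

theorem isCompact_unitSquare (a b : ℝ) : IsCompact (UnitSquare a b) :=
  isCompact_Icc.prod isCompact_Icc

theorem isClosed_unitSquare (a b : ℝ) : IsClosed (UnitSquare a b) :=
  (isCompact_unitSquare a b).isClosed

theorem convex_unitSquare (a b : ℝ) : Convex ℝ (UnitSquare a b) :=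
  (convex_Icc _ _).prod (convex_Icc _ _)

theorem unitSquare_mem_nhds {a b : ℝ} {x : ℝ × ℝ} (hx : x ∈ Ioo a (a + 1) ×ˢ Ioo b (b + 1)) :
    UnitSquare a b ∈ nhds x :=
  prod_mem_nhds (Icc_mem_nhds hx.1.1 hx.1.2) (Icc_mem_nhds hx.2.1 hx.2.2)

theorem isSegmentUnion_frontier_Icc_prod_Icc {a a' b b' : ℝ} (ha : a ≤ a') (hb : b ≤ b') :
    IsSegmentUnion (frontier (Icc a a' ×ˢ Icc b b')) := by
  rw [frontier_prod_eq, closure_Icc, closure_Icc, frontier_Icc ha, frontier_Icc hb,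
    prod_insert, prod_singleton, insert_prod, singleton_prod, ← segment_eq_Icc ha,
    ← segment_eq_Icc hb, Prod.image_mk_segment_left, Prod.image_mk_segment_left,
    Prod.image_mk_segment_right, Prod.image_mk_segment_right]
  exact ((isSegmentUnion_segment _ _).union (isSegmentUnion_segment _ _)).union
    ((isSegmentUnion_segment _ _).union (isSegmentUnion_segment _ _))

theorem isPolygon_iff_isSegmentUnion {P : Set (ℝ × ℝ)} :
    IsPolygon P ↔ IsCompact P ∧ (interior P).Nonempty ∧ P = closure (interior P) ∧
      IsSegmentUnion (frontier P) := by
  rw [IsPolygon, isSegmentUnion_iff_exists_fin]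

theorem Convex.isPolygon {K : Set (ℝ × ℝ)} (hK : Convex ℝ K) (hcpt : IsCompact K)
    (hint : (interior K).Nonempty) (hfr : IsSegmentUnion (frontier K)) : IsPolygon K := by
  refine isPolygon_iff_isSegmentUnion.2 ⟨hcpt, hint, ?_, hfr⟩
  rw [hK.closure_interior_eq_closure_of_nonempty_interior hint, hcpt.isClosed.closure_eq]

theorem IsPolygon.isClosed {P : Set (ℝ × ℝ)} (hP : IsPolygon P) : IsClosed P :=
  hP.1.isClosed

theorem IsPolygon.inter_of_convex {P Q : Set (ℝ × ℝ)} (hP : IsPolygon P) (hQ : IsPolygon Q)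
    (hPconv : Convex ℝ P) (hQconv : Convex ℝ Q) (hint : (interior (P ∩ Q)).Nonempty) :
    IsPolygon (P ∩ Q) := by
  have hPQconv := hPconv.inter hQconv
  refine hPQconv.isPolygon (hP.1.inter_right hQ.isClosed) hint ?_
  rw [hP.isClosed.frontier_inter hQ.isClosed]
  exact ((isPolygon_iff_isSegmentUnion.1 hP).2.2.2.union
    (isPolygon_iff_isSegmentUnion.1 hQ).2.2.2).inter hPQconv (hP.isClosed.inter hQ.isClosed)

theorem isPolygon_unitSquare (a b : ℝ) : IsPolygon (UnitSquare a b) := by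
  refine (convex_unitSquare a b).isPolygon (isCompact_unitSquare a b) ?_
    (isSegmentUnion_frontier_Icc_prod_Icc (by linarith) (by linarith))
  refine ⟨(a + 1 / 2, b + 1 / 2), mem_interior_iff_mem_nhds.2 (unitSquare_mem_nhds ?_)⟩
  constructor <;> constructor <;> dsimp only <;> linarith

theorem isSmallPiece_inter_unitSquare {S : Set (ℝ × ℝ)} (hS : IsPolygon S)
    (hSconv : Convex ℝ S) {a b : ℝ} (hint : (interior (S ∩ UnitSquare a b)).Nonempty) :
    IsSmallPiece (S ∩ UnitSquare a b) :=
  ⟨hS.inter_of_convex (isPolygon_unitSquare a b) hSconv (convex_unitSquare a b) hint,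
    (hSconv.inter (convex_unitSquare a b)).isConnected (hint.mono interior_subset),
    a, b, inter_subset_right⟩

theorem exists_smallCover_ncard_le {S : Set (ℝ × ℝ)} (hS : IsPolygon S) (hSconv : Convex ℝ S)
    {𝒬 : Set (Set (ℝ × ℝ))} (h𝒬 : 𝒬.Finite) (hsmall : ∀ Q ∈ 𝒬, ∃ a b, Q ⊆ UnitSquare a b)
    (hcov : S ⊆ ⋃₀ 𝒬) : ∃ ℛ, IsSmallCover S ℛ ∧ ℛ.ncard ≤ 𝒬.ncard := by
  choose! a b hab using hsmall
  set F : Set (ℝ × ℝ) → Set (ℝ × ℝ) := fun Q => S ∩ UnitSquare (a Q) (b Q)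
  set 𝒢 := {Q ∈ 𝒬 | (interior (F Q)).Nonempty}
  have h𝒢 : 𝒢.Finite := h𝒬.subset (sep_subset _ _)
  refine ⟨F '' 𝒢, ⟨h𝒢.image F, ?_, ?_⟩,
    (ncard_image_le h𝒢).trans (ncard_le_ncard (sep_subset _ _) h𝒬)⟩
  · rintro _ ⟨Q, hQ, rfl⟩
    exact ⟨isSmallPiece_inter_unitSquare hS hSconv hQ.2, inter_subset_left⟩
  · refine (sUnion_subset ?_).antisymm ?_
    · rintro _ ⟨Q, -, rfl⟩
      exact inter_subset_left
    have hSF : S ⊆ ⋃ Q ∈ 𝒬, F Q := fun x hx => by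
      obtain ⟨Q, hQ, hxQ⟩ := hcov hx
      exact mem_biUnion hQ ⟨hx, hab Q hQ hxQ⟩
    rw [sUnion_image]
    exact subset_biUnion_interior_nonempty hS.2.2.1 h𝒬
      (fun Q => hS.isClosed.inter (isClosed_unitSquare _ _)) hSF

theorem IsCompact.exists_finite_unitSquare_cover {K : Set (ℝ × ℝ)} (hK : IsCompact K) :
    ∃ 𝒬 : Set (Set (ℝ × ℝ)), 𝒬.Finite ∧ (∀ Q ∈ 𝒬, ∃ a b, Q ⊆ UnitSquare a b) ∧ K ⊆ ⋃₀ 𝒬 := by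
  set U : ℝ × ℝ → Set (ℝ × ℝ) := fun x => UnitSquare (x.1 - 1 / 2) (x.2 - 1 / 2)
  obtain ⟨t, -, ht⟩ := hK.elim_nhds_subcover U fun x _ => unitSquare_mem_nhds
    ⟨⟨by linarith, by linarith⟩, ⟨by linarith, by linarith⟩⟩
  refine ⟨U '' t, t.finite_toSet.image U, ?_, by rwa [sUnion_image]⟩
  rintro _ ⟨x, -, rfl⟩
  exact ⟨_, _, subset_rfl⟩

theorem IsPolygon.exists_smallCover {T : Set (ℝ × ℝ)} (hT : IsPolygon T) (hTconv : Convex ℝ T) :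
    ∃ 𝒬, IsSmallCover T 𝒬 := by
  obtain ⟨𝒬, h𝒬, hsmall, hcov⟩ := hT.1.exists_finite_unitSquare_cover
  obtain ⟨ℛ, hℛ, -⟩ := exists_smallCover_ncard_le hT hTconv h𝒬 hsmall hcov
  exact ⟨ℛ, hℛ⟩

/-- If `S ⊆ T` are convex polygons and `T` has a small cover of cardinality `k`, then `S`
has one of cardinality at most `k`; in particular the minimum cardinality of a small cover
of `S` is at most that of `T`. -/
theorem convex_cover_monotone (S T : Set (ℝ × ℝ))
    (hS : IsPolygon S) (hSconv : Convex ℝ S)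
    (hT : IsPolygon T) (hTconv : Convex ℝ T) (hST : S ⊆ T) :
    (∀ k : ℕ, (∃ 𝒬 : Set (Set (ℝ × ℝ)), IsSmallCover T 𝒬 ∧ 𝒬.ncard = k) →
      ∃ ℛ : Set (Set (ℝ × ℝ)), IsSmallCover S ℛ ∧ ℛ.ncard ≤ k) ∧
    sInf {k : ℕ | ∃ 𝒬 : Set (Set (ℝ × ℝ)), IsSmallCover S 𝒬 ∧ 𝒬.ncard = k} ≤
      sInf {k : ℕ | ∃ 𝒬 : Set (Set (ℝ × ℝ)), IsSmallCover T 𝒬 ∧ 𝒬.ncard = k} := by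
  have hcard : ∀ k : ℕ, (∃ 𝒬 : Set (Set (ℝ × ℝ)), IsSmallCover T 𝒬 ∧ 𝒬.ncard = k) →
      ∃ ℛ : Set (Set (ℝ × ℝ)), IsSmallCover S ℛ ∧ ℛ.ncard ≤ k := by
    rintro k ⟨𝒬, ⟨h𝒬, hpieces, hunion⟩, rfl⟩
    exact exists_smallCover_ncard_le hS hSconv h𝒬 (fun Q hQ => (hpieces Q hQ).1.2.2)
      (hST.trans hunion.ge)
  refine ⟨hcard, ?_⟩
  obtain ⟨𝒬₀, h𝒬₀⟩ := hT.exists_smallCover hTconv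
  obtain ⟨ℛ, hℛ, hle⟩ := hcard _
    (Nat.sInf_mem (s := {k | ∃ 𝒬, IsSmallCover T 𝒬 ∧ 𝒬.ncard = k}) ⟨_, 𝒬₀, h𝒬₀, rfl⟩)
  exact le_trans (Nat.sInf_le ⟨ℛ, hℛ, rfl⟩) hle
end

section
/- Let P be a polygon with n edges (n ≥ 3) and let S be a closed axis-aligned unit square with P ∩ S ≠ ∅. Then the number of connected components of P ∩ S is at most n. -/
/-!
Each connected component of `P ∩ S` either meets the frontier of `P` or lies in the interior
of `P`. In the second case the component is relatively open and closed in the connected square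
`S`, so it is all of `S` and there is only one component. In the first case the component meets
an edge `E` of `P` (every frontier point lies on a maximal segment of the frontier, because the
frontier of a regular closed planar set has no isolated points), and since `E ∩ S` is connected
and contained in `P ∩ S`, distinct components meet distinct edges.
-/

open Set

open Metric Topology

section Topology

variable {X : Type*} [TopologicalSpace X] {s t : Set X}

theorem IsPreconnected.inter_frontier_nonempty (hs : IsPreconnected s)
    (hst : (s ∩ t).Nonempty) (hst' : (s \ t).Nonempty) : (s ∩ frontier t).Nonempty := by
  by_contra h
  have hcover : s ⊆ interior t ∪ (closure t)ᶜ := fun z hz => by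
    by_cases hzt : z ∈ interior t
    · exact .inl hzt
    · exact .inr fun hzc => h ⟨z, hz, hzc, hzt⟩
  have hst_int : (s ∩ interior t).Nonempty := by
    obtain ⟨z, hzs, hzt⟩ := hst
    exact ⟨z, hzs, (hcover hzs).resolve_right (not_not.2 (subset_closure hzt))⟩
  obtain ⟨z, hzs, hzt⟩ := hst'
  exact hzt <| interior_subset <| hs.subset_left_of_subset_union isOpen_interior
    isClosed_closure.isOpen_compl (disjoint_compl_right.mono_left interior_subset_closure)
    hcover hst_int hzs

theorem IsClosed.connectedComponentIn (hs : IsClosed s) (x : X) :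
    IsClosed (connectedComponentIn s x) := by
  by_cases hx : x ∈ s
  · exact isClosed_of_closure_subset <|
      isPreconnected_connectedComponentIn.closure.subset_connectedComponentIn
        (subset_closure (mem_connectedComponentIn hx))
        (closure_minimal (connectedComponentIn_subset _ _) hs)
  · rw [connectedComponentIn_eq_empty hx]
    exact isClosed_empty

theorem IsPreconnected.subset_of_mem_nhdsWithin (hs : IsPreconnected s) (ht : IsClosed t)
    (hst : (s ∩ t).Nonempty) (hloc : ∀ y ∈ t, t ∈ 𝓝[s] y) : s ⊆ t := by
  choose! u hu_open hyu hus using fun y hy => mem_nhdsWithin.1 (hloc y hy)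
  have hcover : s ⊆ (⋃ y ∈ t, u y) ∪ tᶜ := fun z _ => by
    by_cases hz : z ∈ t
    · exact .inl (mem_biUnion hz (hyu z hz))
    · exact .inr hz
  by_contra hsub
  obtain ⟨z, hzs, hzu, hzt⟩ := hs _ _ (isOpen_biUnion hu_open) ht.isOpen_compl hcover
    (hst.mono fun z hz => ⟨hz.1, mem_biUnion hz.2 (hyu z hz.2)⟩) (not_subset.1 hsub)
  obtain ⟨y, hy, hzy⟩ := mem_iUnion₂.1 hzu
  exact hzt (hus y hy ⟨hzy, hzs⟩)

theorem connectedComponentIn_eq_of_isPreconnected {F : Set X} (hs : IsPreconnected s)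
    (hsF : s ⊆ F) {x y : X} (hx : x ∈ s) (hy : y ∈ s) :
    connectedComponentIn F x = connectedComponentIn F y :=
  connectedComponentIn_eq (hs.subset_connectedComponentIn hx hsF hy)

theorem setOf_connectedComponentIn_eq_singleton (hs : IsPreconnected s)
    (hne : s.Nonempty) : {C | ∃ x ∈ s, C = connectedComponentIn s x} = {s} := by
  obtain ⟨x, hx⟩ := hne
  exact eq_singleton_iff_unique_mem.2 ⟨⟨x, hx, (hs.connectedComponentIn hx).symm⟩,
    fun C ⟨y, hy, hC⟩ => hC.trans (hs.connectedComponentIn hy)⟩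

end Topology

theorem Set.finite_and_ncard_le_of_forall_exists {α β : Type*} {s : Set α} {t : Set β}
    (ht : t.Finite) (r : α → β → Prop) (hr : ∀ a ∈ s, ∃ b ∈ t, r a b)
    (hr_inj : ∀ a ∈ s, ∀ a' ∈ s, ∀ b ∈ t, r a b → r a' b → a = a') :
    s.Finite ∧ s.ncard ≤ t.ncard := by
  rcases s.eq_empty_or_nonempty with rfl | ⟨a, ha⟩
  · simp
  have : Nonempty β := ⟨(hr a ha).choose⟩
  choose! f hft hf using hr
  have hf_inj : InjOn f s := fun a ha a' ha' h =>
    hr_inj a ha a' ha' _ (hft a ha) (hf a ha) (h ▸ hf a' ha')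
  exact ⟨ht.of_injOn hft hf_inj, ncard_le_ncard_of_injOn f hft hf_inj ht⟩

section NormedSpace

variable {E : Type*} [NormedAddCommGroup E] [NormedSpace ℝ E]

theorem isClosed_segment (x y : E) : IsClosed (segment ℝ x y) :=
  segment_eq_image_lineMap ℝ x y ▸ (isCompact_Icc.image AffineMap.lineMap_continuous).isClosed

theorem isClosedEmbedding_lineMap {p q : E} (hpq : p ≠ q) :
    IsClosedEmbedding (AffineMap.lineMap p q : ℝ → E) := by
  have : (AffineMap.lineMap p q : ℝ → E) = (· + p) ∘ (· • (q - p)) := by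
    ext t
    simp [AffineMap.lineMap_apply_module']
  rw [this]
  exact (Homeomorph.addRight p).isClosedEmbedding.comp
    (isClosedEmbedding_smul_left (sub_ne_zero.2 hpq.symm))

theorem segment_subset_range_lineMap {p q u v : E} (hpq : p ≠ q) (hp : p ∈ segment ℝ u v)
    (hq : q ∈ segment ℝ u v) :
    segment ℝ u v ⊆ range (AffineMap.lineMap p q : ℝ → E) := by
  have hline : ∀ w ∈ segment ℝ u v, w ∈ line[ℝ, u, v] := fun w hw =>
    (mem_segment_iff_wbtw.1 hw).mem_affineSpan
  intro z hz
  have hcol : Collinear ℝ {z, p, q} :=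
    collinear_triple_of_mem_affineSpan_pair (hline z hz) (hline p hp) (hline q hq)
  exact mem_affineSpan_pair_iff_exists_lineMap_eq.1 <|
    hcol.mem_affineSpan_of_mem_of_ne (by simp) (by simp) (by simp) hpq

theorem isPreconnected_ball_diff_center (h : 1 < Module.rank ℝ E) (c : E) (r : ℝ) :
    IsPreconnected (ball c r \ {c}) := by
  rcases le_or_gt r 0 with hr | hr
  · simp [ball_eq_empty.2 hr, isPreconnected_empty]
  set e := OpenPartialHomeomorph.univBall c r
  have he : Function.Injective e := injOn_univ.1 (by simpa [e] using e.injOn)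
  have himage : e '' {0}ᶜ = ball c r \ {c} := by
    rw [compl_eq_univ_sdiff, image_sdiff he, image_singleton,
      OpenPartialHomeomorph.univBall_apply_zero, ← OpenPartialHomeomorph.univBall_source c r,
      e.image_source_eq_target, OpenPartialHomeomorph.univBall_target c hr]
  rw [← himage]
  exact (isConnected_compl_singleton_of_one_lt_rank h 0).isPreconnected.image _
    (OpenPartialHomeomorph.continuous_univBall c r).continuousOn

theorem mem_closure_frontier_diff_singleton (h : 1 < Module.rank ℝ E) {P : Set E}
    (hP : P = closure (interior P)) {x : E} (hx : x ∈ frontier P) :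
    x ∈ closure (frontier P \ {x}) := by
  have hxP : x ∈ P := (hP ▸ isClosed_closure : IsClosed P).frontier_subset hx
  rw [Metric.mem_closure_iff]
  intro ε hε
  have hmeets : ((ball x ε \ {x}) ∩ P).Nonempty := by
    obtain ⟨w, hw, hxw⟩ :=
      Metric.mem_closure_iff.1 (hP ▸ hxP : x ∈ closure (interior P)) ε hε
    refine ⟨w, ⟨mem_ball'.2 hxw, ?_⟩, interior_subset hw⟩
    rintro rfl
    exact hx.2 hw
  have hleaves : ((ball x ε \ {x}) \ P).Nonempty := by
    by_contra hsub
    rw [not_nonempty_iff_eq_empty, sdiff_eq_empty] at hsub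
    refine hx.2 (mem_interior.2 ⟨ball x ε, fun z hz => ?_, isOpen_ball, mem_ball_self hε⟩)
    by_cases hzx : z = x
    · exact hzx ▸ hxP
    · exact hsub ⟨hz, hzx⟩
  obtain ⟨z, ⟨hzx, hzx'⟩, hzf⟩ :=
    (isPreconnected_ball_diff_center h x ε).inter_frontier_nonempty hmeets hleaves
  exact ⟨z, ⟨hzf, hzx'⟩, mem_ball'.1 hzx⟩

theorem subset_of_connectedComponentIn_subset_interior {P S : Set E} (hP : IsClosed P)
    (hS : Convex ℝ S) (hS_closed : IsClosed S) {x : E} (hx : x ∈ P ∩ S)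
    (hint : connectedComponentIn (P ∩ S) x ⊆ interior P) : S ⊆ P := by
  have hloc : ∀ y ∈ connectedComponentIn (P ∩ S) x,
      connectedComponentIn (P ∩ S) x ∈ 𝓝[S] y := by
    intro y hy
    obtain ⟨ε, hε, hball⟩ := Metric.mem_nhds_iff.1 (isOpen_interior.mem_nhds (hint hy))
    refine mem_nhdsWithin_iff.2 ⟨ε, hε, ?_⟩
    rw [connectedComponentIn_eq hy]
    exact ((convex_ball y ε).inter hS).isPreconnected.subset_connectedComponentIn
      ⟨mem_ball_self hε, (connectedComponentIn_subset _ _ hy).2⟩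
      fun z hz => ⟨interior_subset (hball hz.1), hz.2⟩
  exact (hS.isPreconnected.subset_of_mem_nhdsWithin ((hP.inter hS_closed).connectedComponentIn x)
    ⟨x, hx.2, mem_connectedComponentIn hx⟩ hloc).trans
    ((connectedComponentIn_subset _ _).trans inter_subset_left)

end NormedSpace

theorem exists_maximal_segment_superset {F : Set (ℝ × ℝ)} (hF : IsCompact F) {p q : ℝ × ℝ}
    (hpq : p ≠ q) (hpqF : segment ℝ p q ⊆ F) :
    ∃ E, IsSeg E ∧ E ⊆ F ∧ (∀ E', IsSeg E' → E' ⊆ F → E ⊆ E' → E' = E) ∧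
      segment ℝ p q ⊆ E := by
  -- The maximal segment is `φ '' C`, where `C` is the interval of parameters around `[0, 1]`
  -- along which the line through `p` and `q` stays in `F`.
  set φ : ℝ →ᵃ[ℝ] ℝ × ℝ := AffineMap.lineMap p q
  have hφ : IsClosedEmbedding φ := isClosedEmbedding_lineMap hpq
  set C := connectedComponentIn (φ ⁻¹' F) 0
  have hpq_image : segment ℝ p q = φ '' Icc 0 1 := segment_eq_image_lineMap ℝ p q
  have h01F : Icc 0 1 ⊆ φ ⁻¹' F := image_subset_iff.1 (hpq_image ▸ hpqF)
  have h01 : Icc 0 1 ⊆ C :=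
    isPreconnected_Icc.subset_connectedComponentIn (left_mem_Icc.2 zero_le_one) h01F
  have hC : IsCompact C :=
    (hφ.isCompact_preimage hF).of_isClosed_subset
      ((hF.isClosed.preimage hφ.continuous).connectedComponentIn 0)
      (connectedComponentIn_subset _ _)
  have hC_Icc : C = Icc (sInf C) (sSup C) := eq_Icc_of_connected_compact
    (isConnected_connectedComponentIn_iff.2 (h01F (left_mem_Icc.2 zero_le_one))) hC
  have hlt : sInf C < sSup C := by
    obtain ⟨h0, h1⟩ := (Icc_subset_Icc_iff zero_le_one).1 (hC_Icc ▸ h01)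
    linarith
  have hφC : φ '' C = segment ℝ (φ (sInf C)) (φ (sSup C)) := by
    rw [← image_segment, segment_eq_Icc hlt.le, ← hC_Icc]
  refine ⟨φ '' C, ⟨_, _, hφ.injective.ne hlt.ne, hφC⟩,
    image_subset_iff.2 (connectedComponentIn_subset _ _), ?_, hpq_image ▸ image_mono h01⟩
  rintro _ ⟨u, v, -, rfl⟩ huvF hCuv
  have hφ0 : φ 0 ∈ segment ℝ u v :=
    hCuv (mem_image_of_mem φ (h01 (left_mem_Icc.2 zero_le_one)))
  have hφ1 : φ 1 ∈ segment ℝ u v :=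
    hCuv (mem_image_of_mem φ (h01 (right_mem_Icc.2 zero_le_one)))
  have hrange :=
    segment_subset_range_lineMap hpq (by simpa [φ] using hφ0) (by simpa [φ] using hφ1)
  have hpre : φ ⁻¹' segment ℝ u v ⊆ C :=
    ((convex_segment u v).affine_preimage φ).isPreconnected.subset_connectedComponentIn hφ0
      (preimage_mono huvF)
  refine subset_antisymm ?_ hCuv
  calc segment ℝ u v = φ '' (φ ⁻¹' segment ℝ u v) :=
        (image_preimage_eq_of_subset hrange).symm
    _ ⊆ φ '' C := image_mono hpre

namespace IsPolygon

variable {P : Set (ℝ × ℝ)}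

theorem exists_segment_subset_frontier (hP : IsPolygon P) {x : ℝ × ℝ} (hx : x ∈ frontier P) :
    ∃ p q, p ≠ q ∧ x ∈ segment ℝ p q ∧ segment ℝ p q ⊆ frontier P := by
  obtain ⟨-, -, hreg, m, f, g, hfg⟩ := hP
  have hx' := mem_closure_frontier_diff_singleton
    (by rw [rank_prod', Module.rank_self]; norm_num) hreg hx
  rw [hfg, iUnion_sdiff, closure_iUnion_of_finite, mem_iUnion] at hx'
  obtain ⟨i, hi⟩ := hx'
  refine ⟨f i, g i, fun hfgi => ?_, closure_minimal sdiff_subset (isClosed_segment _ _) hi,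
    hfg ▸ subset_iUnion (fun j => segment ℝ (f j) (g j)) i⟩
  rw [hfgi, segment_same] at hi
  obtain rfl : x = g i := closure_minimal sdiff_subset isClosed_singleton hi
  simp at hi

theorem exists_isEdge_mem (hP : IsPolygon P) {x : ℝ × ℝ} (hx : x ∈ frontier P) :
    ∃ E, IsEdge P E ∧ x ∈ E := by
  obtain ⟨p, q, hpq, hxpq, hpqF⟩ := hP.exists_segment_subset_frontier hx
  obtain ⟨E, hE, hEF, hmax, hpqE⟩ := exists_maximal_segment_superset
    (hP.1.of_isClosed_subset isClosed_frontier hP.1.isClosed.frontier_subset) hpq hpqF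
  exact ⟨E, ⟨hE, hEF, hmax⟩, hpqE hxpq⟩

theorem components_finite_and_ncard_le_edges (hP : IsPolygon P) {S : Set (ℝ × ℝ)}
    (hS : Convex ℝ S) (hedges : {E | IsEdge P E}.Finite)
    (hfrontier : ∀ x ∈ P ∩ S, ¬connectedComponentIn (P ∩ S) x ⊆ interior P) :
    {C | ∃ x ∈ P ∩ S, C = connectedComponentIn (P ∩ S) x}.Finite ∧
      {C | ∃ x ∈ P ∩ S, C = connectedComponentIn (P ∩ S) x}.ncard ≤
        {E | IsEdge P E}.ncard := by
  refine finite_and_ncard_le_of_forall_exists hedges (fun C E => (C ∩ E).Nonempty) ?_ ?_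
  · rintro _ ⟨x, hx, rfl⟩
    obtain ⟨y, hyC, hy_int⟩ := not_subset.1 (hfrontier x hx)
    have hyP : y ∈ frontier P := hP.1.isClosed.frontier_eq ▸
      ⟨(connectedComponentIn_subset _ _ hyC).1, hy_int⟩
    obtain ⟨E, hE, hyE⟩ := hP.exists_isEdge_mem hyP
    exact ⟨E, hE, y, hyC, hyE⟩
  · rintro _ ⟨x, -, rfl⟩ _ ⟨x', -, rfl⟩ E ⟨⟨u, v, -, rfl⟩, hEF, -⟩
      ⟨y, hyC, hyE⟩ ⟨y', hyC', hyE'⟩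
    have hEK : segment ℝ u v ∩ S ⊆ P ∩ S :=
      inter_subset_inter_left _ (hEF.trans hP.1.isClosed.frontier_subset)
    rw [connectedComponentIn_eq hyC, connectedComponentIn_eq hyC']
    exact connectedComponentIn_eq_of_isPreconnected
      ((convex_segment u v).inter hS).isPreconnected hEK
      ⟨hyE, (connectedComponentIn_subset _ _ hyC).2⟩
      ⟨hyE', (connectedComponentIn_subset _ _ hyC').2⟩

end IsPolygon

theorem components_of_intersection_le_edges_general (P : Set (ℝ × ℝ)) (hP : IsPolygon P)
    (n : ℕ) (hn : 3 ≤ n) (hedges : {E | IsEdge P E}.ncard = n)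
    (a b : ℝ) :
    {C | ∃ x ∈ P ∩ UnitSquare a b, C = connectedComponentIn (P ∩ UnitSquare a b) x}.Finite ∧
    {C | ∃ x ∈ P ∩ UnitSquare a b,
      C = connectedComponentIn (P ∩ UnitSquare a b) x}.ncard ≤ n := by
  have hS : Convex ℝ (UnitSquare a b) := (convex_Icc _ _).prod (convex_Icc _ _)
  have hS_closed : IsClosed (UnitSquare a b) := isClosed_Icc.prod isClosed_Icc
  by_cases hint : ∃ x ∈ P ∩ UnitSquare a b,
      connectedComponentIn (P ∩ UnitSquare a b) x ⊆ interior P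
  · obtain ⟨x, hx, hxint⟩ := hint
    have hPS : P ∩ UnitSquare a b = UnitSquare a b := inter_eq_right.2 <|
      subset_of_connectedComponentIn_subset_interior hP.1.isClosed hS hS_closed hx hxint
    rw [hPS, setOf_connectedComponentIn_eq_singleton hS.isPreconnected ⟨x, hx.2⟩,
      ncard_singleton]
    exact ⟨finite_singleton _, by omega⟩
  · rw [← hedges]
    exact hP.components_finite_and_ncard_le_edges hS (finite_of_ncard_pos (by omega))
      fun x hx h => hint ⟨x, hx, h⟩

/-- If `P` is a polygon with `n ≥ 3` edges and `S` is a closed axis-aligned unit square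
meeting `P`, then `P ∩ S` has at most `n` connected components. -/
theorem components_of_intersection_le_edges (P : Set (ℝ × ℝ)) (hP : IsPolygon P)
    (n : ℕ) (hn : 3 ≤ n) (hedges : {E | IsEdge P E}.ncard = n)
    (a b : ℝ) (hne : (P ∩ UnitSquare a b).Nonempty) :
    {C | ∃ x ∈ P ∩ UnitSquare a b, C = connectedComponentIn (P ∩ UnitSquare a b) x}.Finite ∧
    {C | ∃ x ∈ P ∩ UnitSquare a b,
      C = connectedComponentIn (P ∩ UnitSquare a b) x}.ncard ≤ n :=
  components_of_intersection_le_edges_general P hP n hn hedges a b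
end

section
/- Let C ⊆ ℝ² be a convex quadrilateral with two vertical sides lying on the lines x = a and x = a + t·d, where t is a positive integer and d > 0. For 1 ≤ j ≤ t let Sʲ = C ∩ ([a + (j−1)·d, a + j·d] × ℝ) be the j-th section of C. Then there exist translation vectors v₁, …, v_t ∈ ℝ² such that either Sʲ + v_j ⊆ Sʲ⁺¹ + v_{j+1} for all 1 ≤ j < t, or Sʲ + v_j ⊇ Sʲ⁺¹ + v_{j+1} for all 1 ≤ j < t. -/
open Set

/-- The `j`-th section of `C` (for a corridor starting at `x = a`, cut into slabs of
width `d`): the part of `C` with `x`-coordinate in `[a + (j-1)·d, a + j·d]`. -/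
def corridorSection (C : Set (ℝ × ℝ)) (a d : ℝ) (j : ℕ) : Set (ℝ × ℝ) :=
  C ∩ (Icc (a + ((j : ℝ) - 1) * d) (a + (j : ℝ) * d) ×ˢ (univ : Set ℝ))

/-!
Both non-vertical sides of `C` are graphs of affine functions `f ≤ g`, so `C` is the closed
region between these graphs over `[a, a + t d]`. Translating the `j`-th section by
`-(xⱼ, f xⱼ)`, where `xⱼ = a + (j - 1) d` is its left end, turns it into the region over
`[0, d]` between the graphs of the linear parts of `f` and `g`, the upper one raised by the
height `(g - f) xⱼ`. This height is affine in `j`, hence monotone or antitone, and the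
normalized sections grow or shrink with it.
-/

/-- Closed counterpart of Mathlib's `regionBetween`. -/
def closedRegionBetween (f g : ℝ → ℝ) (s : Set ℝ) : Set (ℝ × ℝ) :=
  {p | p.1 ∈ s ∧ p.2 ∈ Icc (f p.1) (g p.1)}

section closedRegionBetween

variable {f g : ℝ → ℝ} {s : Set ℝ}

lemma closedRegionBetween_mono_right {g' : ℝ → ℝ} (h : ∀ x ∈ s, g x ≤ g' x) :
    closedRegionBetween f g s ⊆ closedRegionBetween f g' s :=
  fun _ ⟨hx, hlo, hhi⟩ => ⟨hx, hlo, hhi.trans (h _ hx)⟩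

lemma closedRegionBetween_inter_prod_univ (t : Set ℝ) :
    closedRegionBetween f g s ∩ t ×ˢ univ = closedRegionBetween f g (s ∩ t) := by
  ext p
  simp only [closedRegionBetween, mem_inter_iff, mem_ofPred_eq, mem_prod, mem_univ, and_true]
  tauto

lemma ConvexOn.convex_closedRegionBetween (hf : ConvexOn ℝ s f) (hg : ConcaveOn ℝ s g) :
    Convex ℝ (closedRegionBetween f g s) := by
  convert hf.convex_epigraph.inter hg.convex_hypograph using 1
  ext p
  simp only [closedRegionBetween, mem_Icc, mem_inter_iff, mem_ofPred_eq]
  tauto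

end closedRegionBetween

section affine

variable (f g : ℝ →ᵃ[ℝ] ℝ)

lemma AffineMap.convexOn_univ : ConvexOn ℝ univ f :=
  (convexOn_id convex_univ).comp_affineMap f

lemma AffineMap.concaveOn_univ : ConcaveOn ℝ univ f :=
  (concaveOn_id convex_univ).comp_affineMap f

lemma convexHull_trapezoid {a b : ℝ} (hab : a ≤ b) (ha : f a ≤ g a) (hb : f b ≤ g b) :
    convexHull ℝ {(a, f a), (a, g a), (b, f b), (b, g b)} =
      closedRegionBetween f g (Icc a b) := by
  apply (convexHull_min _ _).antisymm
  · rintro ⟨x, y⟩ ⟨hx, hy⟩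
    have hull_convex := convex_convexHull ℝ ({(a, f a), (a, g a), (b, f b), (b, g b)} : Set _)
    have lower : (x, f x) ∈ segment ℝ (a, f a) (b, f b) :=
      (image_segment ℝ ((AffineMap.id ℝ ℝ).prod f) a b).subset
        ⟨x, by rwa [segment_eq_Icc hab], rfl⟩
    have upper : (x, g x) ∈ segment ℝ (a, g a) (b, g b) :=
      (image_segment ℝ ((AffineMap.id ℝ ℝ).prod g) a b).subset
        ⟨x, by rwa [segment_eq_Icc hab], rfl⟩
    have vertical : (x, y) ∈ segment ℝ (x, f x) (x, g x) := by
      rw [← Prod.image_mk_segment_right, segment_eq_Icc (hy.1.trans hy.2)]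
      exact ⟨y, hy, rfl⟩
    refine hull_convex.segment_subset ?_ ?_ vertical
    · exact hull_convex.segment_subset (subset_convexHull ℝ _ (by simp))
        (subset_convexHull ℝ _ (by simp)) lower
    · exact hull_convex.segment_subset (subset_convexHull ℝ _ (by simp))
        (subset_convexHull ℝ _ (by simp)) upper
  · simp only [insert_subset_iff, singleton_subset_iff, closedRegionBetween, mem_ofPred_eq,
      left_mem_Icc, right_mem_Icc]
    exact ⟨⟨hab, ha⟩, ⟨hab, ha⟩, ⟨hab, hb⟩, ⟨hab, hb⟩⟩
  · exact ((f.convexOn_univ).subset (subset_univ _) (convex_Icc a b)).convex_closedRegionBetween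
      ((g.concaveOn_univ).subset (subset_univ _) (convex_Icc a b))

lemma image_add_neg_closedRegionBetween (x₀ x₁ : ℝ) :
    (· + -(x₀, f x₀)) '' closedRegionBetween f g (Icc x₀ x₁) =
      closedRegionBetween f.linear (fun u => (g - f) x₀ + g.linear u) (Icc 0 (x₁ - x₀)) := by
  ext ⟨u, w⟩
  have hf := f.map_vadd x₀ u
  have hg := g.map_vadd x₀ u
  simp only [vadd_eq_add] at hf hg
  simp only [image_add_right, neg_neg, closedRegionBetween, mem_preimage, Prod.mk_add_mk,
    mem_ofPred_eq, mem_Icc, hf, hg, AffineMap.coe_sub, Pi.sub_apply]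
  constructor <;> rintro ⟨⟨h₁, h₂⟩, h₃, h₄⟩ <;> refine ⟨⟨?_, ?_⟩, ?_, ?_⟩ <;> linarith

lemma exists_affineMap_apply_eq {a b : ℝ} (hab : a ≠ b) (c₁ c₂ : ℝ) :
    ∃ f : ℝ →ᵃ[ℝ] ℝ, f a = c₁ ∧ f b = c₂ := by
  refine ⟨AffineMap.const ℝ ℝ c₁ + ((c₂ - c₁) / (b - a)) •
    (AffineMap.id ℝ ℝ - AffineMap.const ℝ ℝ a), ?_, ?_⟩
  · simp
  · have : b - a ≠ 0 := sub_ne_zero.2 hab.symm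
    simp [div_mul_cancel₀ _ this]

end affine

lemma corridorSection_closedRegionBetween (f g : ℝ → ℝ) {a b d : ℝ} {j : ℕ} (hd : 0 ≤ d)
    (hj : 1 ≤ j) (hjb : a + j * d ≤ b) :
    corridorSection (closedRegionBetween f g (Icc a b)) a d j =
      closedRegionBetween f g (Icc (a + ((j : ℝ) - 1) * d) (a + j * d)) := by
  have hj' : (0 : ℝ) ≤ j - 1 := sub_nonneg.2 (by exact_mod_cast hj)
  rw [corridorSection, closedRegionBetween_inter_prod_univ, inter_eq_right.2]
  exact Icc_subset_Icc (le_add_of_nonneg_right (mul_nonneg hj' hd)) hjb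

/-- Let `C` be a convex quadrilateral with two vertical sides on the lines `x = a` and
`x = a + t·d` (`t` a positive integer, `d > 0`), and let `Sʲ` be its `j`-th section of
width `d`. Then there are translations `v₁, …, v_t` such that either
`Sʲ + v_j ⊆ Sʲ⁺¹ + v_{j+1}` for all `1 ≤ j < t`, or
`Sʲ + v_j ⊇ Sʲ⁺¹ + v_{j+1}` for all `1 ≤ j < t`. -/
theorem sections_translation_monotone (a d : ℝ) (hd : 0 < d) (t : ℕ) (ht : 0 < t)
    (y₁ y₂ y₃ y₄ : ℝ) (hy₁₂ : y₁ ≤ y₂) (hy₃₄ : y₃ ≤ y₄)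
    (C : Set (ℝ × ℝ))
    (hC : C = convexHull ℝ
      ({(a, y₁), (a, y₂), (a + (t : ℝ) * d, y₃), (a + (t : ℝ) * d, y₄)} : Set (ℝ × ℝ))) :
    ∃ v : ℕ → ℝ × ℝ,
      (∀ j : ℕ, 1 ≤ j → j < t →
        (fun x => x + v j) '' corridorSection C a d j ⊆
          (fun x => x + v (j + 1)) '' corridorSection C a d (j + 1)) ∨
      (∀ j : ℕ, 1 ≤ j → j < t →
        (fun x => x + v (j + 1)) '' corridorSection C a d (j + 1) ⊆
          (fun x => x + v j) '' corridorSection C a d j) := by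
  have hT : 0 < (t : ℝ) * d := mul_pos (by exact_mod_cast ht) hd
  obtain ⟨f, rfl, rfl⟩ := exists_affineMap_apply_eq (a := a) (b := a + t * d) (by linarith) y₁ y₃
  obtain ⟨g, rfl, rfl⟩ := exists_affineMap_apply_eq (a := a) (b := a + t * d) (by linarith) y₂ y₄
  rw [convexHull_trapezoid f g (by linarith) hy₁₂ hy₃₄] at hC
  subst hC
  set x : ℕ → ℝ := fun j => a + ((j : ℝ) - 1) * d
  have section_eq : ∀ j, 1 ≤ j → j ≤ t →
      (· + -(x j, f (x j))) '' corridorSection (closedRegionBetween f g (Icc a (a + t * d))) a d j =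
        closedRegionBetween f.linear (fun u => (g - f) (x j) + g.linear u) (Icc 0 d) := by
    intro j hj hjt
    have : (j : ℝ) * d ≤ t * d := by gcongr
    rw [corridorSection_closedRegionBetween f g hd.le hj (by linarith),
      image_add_neg_closedRegionBetween]
    congr 2
    ring
  have height_succ : ∀ j, (g - f) (x (j + 1)) = (g - f) (x j) + (g - f).linear d := by
    intro j
    have : x (j + 1) = d +ᵥ x j := by simp only [x, vadd_eq_add]; push_cast; ring
    rw [this, AffineMap.map_vadd, vadd_eq_add, add_comm]
  refine ⟨fun j => -(x j, f (x j)), ?_⟩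
  rcases le_total 0 ((g - f).linear d) with hslope | hslope
  · refine .inl fun j hj hjt => ?_
    rw [section_eq j hj hjt.le, section_eq (j + 1) (by omega) hjt]
    exact closedRegionBetween_mono_right fun u _ => by rw [height_succ]; linarith
  · refine .inr fun j hj hjt => ?_
    rw [section_eq j hj hjt.le, section_eq (j + 1) (by omega) hjt]
    exact closedRegionBetween_mono_right fun u _ => by rw [height_succ]; linarith
end
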